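/- Let β > 0, ω > 0 and ε ∈ {1, −1}. Set D_+ := ℂ \ [e^{βω/2}, ∞) for ε = 1 and D_− := ℂ \ (−∞, −e^{βω/2}] for ε = −1. Then for every z in the corresponding domain and every integer k ≥ 0, the point z e^{−(k+1/2)ωβ} lies in the domain of analyticity of f_{3/2}^ε (namely ℂ \ [1,∞) for ε = 1, ℂ \ (−∞,−1] for ε = −1), the series P_∞(β, z, ω) := ω (2πβ)^{−3/2} Σ_{k=0}^∞ f_{3/2}^ε(z e^{−(k+1/2)ωβ}) converges, and the function z ↦ P_∞(β, z, ω) is complex-differentiable (analytic) on the domain D_+ (resp. D_−). -/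

import Mathlib

open MeasureTheory Real Set

noncomputable section

/-- The cut plane `D^ε`: for `ε = 1` this is `ℂ \ [1,∞)`, for `ε = −1` it is
`ℂ \ (−∞,−1]`; both are described by the condition `εζ ∉ [1,∞)`. -/
def cutPlane (ε : ℂ) : Set ℂ := {ζ | ¬((ε * ζ).im = 0 ∧ 1 ≤ (ε * ζ).re)}

/-- The Bose (`ε = 1`) / Fermi (`ε = −1`) function
`f_σ^ε(ζ) = (ζ/Γ(σ)) ∫₀^∞ t^{σ−1}e^{−t}/(1 − ζεe^{−t}) dt`. -/
def boseFermi (σ : ℝ) (ε : ℂ) (ζ : ℂ) : ℂ :=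
  ζ / ((Real.Gamma σ : ℝ) : ℂ) *
    ∫ t in Ioi (0 : ℝ), ((t ^ (σ - 1) * Real.exp (-t) : ℝ) : ℂ) /
      (1 - ζ * ε * ((Real.exp (-t) : ℝ) : ℂ))

/-- The domain `D_±`: for `ε = 1` this is `ℂ \ [e^{βω/2},∞)`, for `ε = −1` it is
`ℂ \ (−∞,−e^{βω/2}]`; both are described by the condition `εz ∉ [e^{βω/2},∞)`. -/
def pressureDomain (ε : ℂ) (β ω : ℝ) : Set ℂ :=
  {z | ¬((ε * z).im = 0 ∧ Real.exp (β * ω / 2) ≤ (ε * z).re)}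


/-! The denominator `1 - ζεe^{-t}` vanishes only for `εζ ∈ [1, ∞)`, and over a compact part of
the cut plane it stays uniformly away from `0` for all `t > 0`; differentiating under the
integral sign then makes `f_σ^ε` holomorphic on the cut plane. For `z ∈ D_±` the whole segment
`z · [0, e^{-βω/2}]` lies in the cut plane, and `f_σ^ε(0) = 0` gives `‖f_σ^ε(ζ)‖ ≤ M‖ζ‖` on
compact sets, so near each point of `D_±` the `k`-th term of the series is `O(e^{-(k+1/2)ωβ})`.
The Weierstrass M-test and holomorphy of locally uniform limits finish the proof. -/

open Filter Topology Metric

theorem isOpen_setOf_not_im_eq_zero_and_le_re (ε : ℂ) (x : ℝ) :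
    IsOpen {z : ℂ | ¬((ε * z).im = 0 ∧ x ≤ (ε * z).re)} := by
  have hclosed : IsClosed {z : ℂ | (ε * z).im = 0 ∧ x ≤ (ε * z).re} :=
    (isClosed_eq (Complex.continuous_im.comp (continuous_const_mul ε)) continuous_const).inter
      (isClosed_le continuous_const (Complex.continuous_re.comp (continuous_const_mul ε)))
  exact hclosed.isOpen_compl

theorem isOpen_cutPlane (ε : ℂ) : IsOpen (cutPlane ε) :=
  isOpen_setOf_not_im_eq_zero_and_le_re ε 1

theorem isOpen_pressureDomain (ε : ℂ) (β ω : ℝ) : IsOpen (pressureDomain ε β ω) :=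
  isOpen_setOf_not_im_eq_zero_and_le_re ε _

theorem cutPlane_mem_nhds_zero (ε : ℂ) : cutPlane ε ∈ 𝓝 0 :=
  (isOpen_cutPlane ε).mem_nhds (by simp [cutPlane])

theorem one_sub_mul_ne_zero_of_mem_cutPlane {a : ℂ} (ha : a ∈ cutPlane 1) {s : ℝ}
    (hs : s ∈ Icc (0 : ℝ) 1) : 1 - a * s ≠ 0 := by
  intro h
  rw [sub_eq_zero, eq_comm] at h
  have him : a.im * s = 0 := by rw [← Complex.im_mul_ofReal, h, Complex.one_im]
  have hre : a.re * s = 1 := by rw [← Complex.re_mul_ofReal, h, Complex.one_re]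
  have hs0 : 0 < s := lt_of_le_of_ne hs.1 (by rintro rfl; norm_num at hre)
  exact ha ⟨by simpa [hs0.ne'] using him, by simp only [one_mul]; nlinarith [hs.2]⟩

theorem mul_mem_cutPlane_of_mem_pressureDomain {ε z : ℂ} {β ω : ℝ}
    (hz : z ∈ pressureDomain ε β ω) {s : ℝ} (hs : s ∈ Icc 0 (Real.exp (-(β * ω / 2)))) :
    z * s ∈ cutPlane ε := by
  rintro ⟨him, hre⟩
  rw [← mul_assoc, Complex.im_mul_ofReal] at him
  rw [← mul_assoc, Complex.re_mul_ofReal] at hre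
  have hs0 : 0 < s := lt_of_le_of_ne hs.1 (by rintro rfl; norm_num at hre)
  have hexp : Real.exp (β * ω / 2) * Real.exp (-(β * ω / 2)) = 1 := by
    rw [← Real.exp_add, add_neg_cancel, Real.exp_zero]
  refine hz ⟨by simpa [hs0.ne'] using him, ?_⟩
  nlinarith [Real.exp_pos (β * ω / 2), hs.2]

theorem IsCompact.exists_pos_le_norm_one_sub_mul {K : Set ℂ} (hK : IsCompact K)
    (hKV : K ⊆ cutPlane 1) : ∃ δ > 0, ∀ a ∈ K, ∀ s ∈ Icc (0 : ℝ) 1, δ ≤ ‖1 - a * s‖ := by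
  rcases K.eq_empty_or_nonempty with rfl | ⟨a₀, ha₀⟩
  · exact ⟨1, one_pos, by simp⟩
  obtain ⟨p, hp, hmin⟩ := (hK.prod isCompact_Icc).exists_isMinOn
    ⟨(a₀, 0), ha₀, left_mem_Icc.2 zero_le_one⟩
    (by fun_prop : Continuous fun p : ℂ × ℝ => ‖1 - p.1 * p.2‖).continuousOn
  exact ⟨_, norm_pos_iff.2 (one_sub_mul_ne_zero_of_mem_cutPlane (hKV hp.1) hp.2),
    fun a ha s hs => hmin (Set.mk_mem_prod ha hs)⟩

theorem hasDerivAt_div_one_sub_mul (c b : ℂ) {a : ℂ} (ha : 1 - a * b ≠ 0) :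
    HasDerivAt (fun a => c / (1 - a * b)) (c * b / (1 - a * b) ^ 2) a :=
  ((hasDerivAt_const a c).fun_div (((hasDerivAt_id' a).mul_const b).const_sub 1) ha).congr_deriv
    (by ring)

theorem differentiableOn_integral_div_one_sub_mul {α : Type*} [MeasurableSpace α]
    {μ : Measure α} {g : α → ℂ} {h : α → ℝ} (hg : Integrable g μ) (hh : AEMeasurable h μ)
    (hh01 : ∀ᵐ x ∂μ, h x ∈ Icc (0 : ℝ) 1) :
    DifferentiableOn ℂ (fun a : ℂ => ∫ x, g x / (1 - a * h x) ∂μ) (cutPlane 1) := by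
  intro a₀ ha₀
  obtain ⟨r, hr, hball⟩ :=
    nhds_basis_closedBall.mem_iff.1 ((isOpen_cutPlane 1).mem_nhds ha₀)
  obtain ⟨δ, hδ, hδle⟩ := (isCompact_closedBall a₀ r).exists_pos_le_norm_one_sub_mul hball
  have hden : ∀ᵐ x ∂μ, ∀ a ∈ closedBall a₀ r, δ ≤ ‖1 - a * h x‖ :=
    hh01.mono fun x hx a ha => hδle a ha _ hx
  have hmeas : ∀ a : ℂ, AEStronglyMeasurable (fun x => g x / (1 - a * h x)) μ := fun a =>
    (hg.1.aemeasurable.div (by fun_prop)).aestronglyMeasurable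
  have hint : Integrable (fun x => g x / (1 - a₀ * h x)) μ := by
    refine (hg.norm.div_const δ).mono' (hmeas a₀) (hden.mono fun x hx => ?_)
    rw [norm_div]
    gcongr
    exact hx a₀ (mem_closedBall_self hr.le)
  have hderiv := hasDerivAt_integral_of_dominated_loc_of_deriv_le
    (F' := fun a x => g x * h x / (1 - a * h x) ^ 2) (bound := fun x => ‖g x‖ / δ ^ 2)
    (closedBall_mem_nhds a₀ hr) (.of_forall hmeas) hint
    ((hg.1.aemeasurable.mul (by fun_prop)).div (by fun_prop)).aestronglyMeasurable
    ?_ (hg.norm.div_const _) ?_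
  · exact hderiv.2.differentiableAt.differentiableWithinAt
  · filter_upwards [hden, hh01] with x hx hx01 a ha
    rw [norm_div, norm_mul, norm_pow, Complex.norm_real, Real.norm_of_nonneg hx01.1]
    calc ‖g x‖ * h x / ‖1 - a * h x‖ ^ 2 ≤ ‖g x‖ * 1 / δ ^ 2 := by
          gcongr
          exacts [hx01.2, hx a ha]
      _ = ‖g x‖ / δ ^ 2 := by rw [mul_one]
  · filter_upwards [hden] with x hx a ha
    exact hasDerivAt_div_one_sub_mul _ _ (norm_pos_iff.1 (hδ.trans_le (hx a ha)))

theorem boseFermi_zero (σ : ℝ) (ε : ℂ) : boseFermi σ ε 0 = 0 := by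
  simp [boseFermi]

theorem differentiableOn_boseFermi {σ : ℝ} (hσ : 0 < σ) (ε : ℂ) :
    DifferentiableOn ℂ (boseFermi σ ε) (cutPlane ε) := by
  have hint : IntegrableOn (fun t : ℝ => ((t ^ (σ - 1) * Real.exp (-t) : ℝ) : ℂ)) (Ioi 0) :=
    ((Real.GammaIntegral_convergent hσ).congr_fun (fun t _ => mul_comm _ _)
      measurableSet_Ioi).ofReal
  have hexp : ∀ᵐ t ∂volume.restrict (Ioi (0 : ℝ)), Real.exp (-t) ∈ Icc (0 : ℝ) 1 :=
    (ae_restrict_mem measurableSet_Ioi).mono fun t ht =>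
      ⟨(Real.exp_pos _).le, Real.exp_le_one_iff.2 (neg_nonpos.2 (le_of_lt ht))⟩
  have hI := differentiableOn_integral_div_one_sub_mul hint (by fun_prop) hexp
  have hmaps : MapsTo (· * ε) (cutPlane ε) (cutPlane 1) := fun ζ hζ => by
    simpa [cutPlane, mul_comm ε] using hζ
  exact (differentiableOn_id.div_const _).mul (hI.comp (differentiableOn_id.mul_const ε) hmaps)

section TsumCompMul

variable {E : Type*} [NormedAddCommGroup E] [NormedSpace ℂ E] [CompleteSpace E]
  {f : ℂ → E} {V : Set ℂ}

theorem exists_norm_le_mul_norm_of_differentiableOn (hf : DifferentiableOn ℂ f V)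
    (hV : V ∈ 𝓝 0) (hf0 : f 0 = 0) {K : Set ℂ} (hK : IsCompact K) (hKV : K ⊆ V) :
    ∃ M ≥ 0, ∀ ζ ∈ K, ‖f ζ‖ ≤ M * ‖ζ‖ := by
  obtain ⟨M, hM⟩ := hK.exists_bound_of_continuousOn
    (((Complex.differentiableOn_dslope hV).2 hf).continuousOn.mono hKV)
  refine ⟨max M 0, le_max_right _ _, fun ζ hζ => ?_⟩
  have hζ' : f ζ = ζ • dslope f 0 ζ := by simpa [hf0] using (sub_smul_dslope f 0 ζ).symm
  rw [hζ', norm_smul, mul_comm]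
  gcongr
  exact (hM ζ hζ).trans (le_max_left _ _)

variable {U : Set ℂ} {b : ℝ}

theorem exists_ball_norm_comp_mul_le (hf : DifferentiableOn ℂ f V) (hV : V ∈ 𝓝 0)
    (hf0 : f 0 = 0) (hU : IsOpen U) (hUV : ∀ z ∈ U, ∀ s ∈ Icc 0 b, z * s ∈ V) {z₀ : ℂ}
    (hz₀ : z₀ ∈ U) :
    ∃ r > 0, ball z₀ r ⊆ U ∧ ∃ C, ∀ z ∈ ball z₀ r, ∀ s ∈ Icc 0 b, ‖f (z * s)‖ ≤ C * s := by
  obtain ⟨r, hr, hball⟩ := nhds_basis_closedBall.mem_iff.1 (hU.mem_nhds hz₀)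
  have hK : IsCompact ((fun p : ℂ × ℝ => p.1 * p.2) '' closedBall z₀ r ×ˢ Icc 0 b) :=
    ((isCompact_closedBall z₀ r).prod isCompact_Icc).image (by fun_prop)
  obtain ⟨M, hM0, hM⟩ := exists_norm_le_mul_norm_of_differentiableOn hf hV hf0 hK
    (by rintro _ ⟨p, hp, rfl⟩; exact hUV p.1 (hball hp.1) p.2 hp.2)
  refine ⟨r, hr, ball_subset_closedBall.trans hball, M * (‖z₀‖ + r), fun z hz s hs => ?_⟩
  have hzr : ‖z‖ ≤ ‖z₀‖ + r := by
    linarith [norm_le_norm_add_norm_sub' z z₀, mem_ball_iff_norm.1 hz]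
  calc ‖f (z * s)‖ ≤ M * (‖z‖ * s) := by
        simpa [Complex.norm_real, abs_of_nonneg hs.1] using
          hM _ ⟨(z, s), ⟨ball_subset_closedBall hz, hs⟩, rfl⟩
    _ ≤ M * ((‖z₀‖ + r) * s) := by gcongr; exact hs.1
    _ = M * (‖z₀‖ + r) * s := by ring

theorem summable_and_differentiableOn_tsum_comp_mul (hf : DifferentiableOn ℂ f V)
    (hV : V ∈ 𝓝 0) (hf0 : f 0 = 0) (hU : IsOpen U) (hUV : ∀ z ∈ U, ∀ s ∈ Icc 0 b, z * s ∈ V)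
    {c : ℕ → ℝ} (hc : ∀ k, c k ∈ Icc 0 b) (hcs : Summable c) :
    (∀ z ∈ U, Summable fun k => f (z * c k)) ∧
      DifferentiableOn ℂ (fun z => ∑' k, f (z * c k)) U := by
  refine ⟨fun z hz => ?_, fun z hz => ?_⟩ <;>
    obtain ⟨r, hr, hball, C, hC⟩ := exists_ball_norm_comp_mul_le hf hV hf0 hU hUV hz
  · exact (hcs.mul_left C).of_norm_bounded fun k => hC z (mem_ball_self hr) _ (hc k)
  · have hterm (k : ℕ) : DifferentiableOn ℂ (fun z => f (z * c k)) (ball z r) :=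
      hf.comp (differentiableOn_id.mul_const _) fun w hw => hUV w (hball hw) _ (hc k)
    exact ((Complex.differentiableOn_tsum_of_summable_norm (hcs.mul_left C) hterm isOpen_ball
      fun k w hw => hC w hw _ (hc k)).differentiableAt
        (isOpen_ball.mem_nhds (mem_ball_self hr))).differentiableWithinAt

end TsumCompMul

theorem summable_exp_neg_nat_add_half_mul {a : ℝ} (ha : 0 < a) :
    Summable fun k : ℕ => Real.exp (-(((k : ℝ) + 1 / 2) * a)) := by
  have hgeo := (summable_geometric_of_lt_one (Real.exp_pos (-a)).le
    (Real.exp_lt_one_iff.2 (neg_lt_zero.2 ha))).mul_left (Real.exp (-(a / 2)))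
  refine hgeo.congr fun k => ?_
  rw [← Real.exp_nat_mul, ← Real.exp_add]
  ring_nf

theorem pressure_thermodynamic_limit_analytic_general (β ω : ℝ) (hβ : 0 < β) (hω : 0 < ω)
    (ε : ℂ) :
    (∀ z ∈ pressureDomain ε β ω,
      (∀ k : ℕ,
        z * ((Real.exp (-(((k : ℝ) + 1 / 2) * ω * β)) : ℝ) : ℂ) ∈ cutPlane ε) ∧
      Summable (fun k : ℕ =>
        boseFermi (3 / 2) ε
          (z * ((Real.exp (-(((k : ℝ) + 1 / 2) * ω * β)) : ℝ) : ℂ)))) ∧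
    DifferentiableOn ℂ
      (fun z : ℂ => ((ω * (2 * π * β) ^ (-(3 : ℝ) / 2) : ℝ) : ℂ) *
        ∑' k : ℕ, boseFermi (3 / 2) ε
          (z * ((Real.exp (-(((k : ℝ) + 1 / 2) * ω * β)) : ℝ) : ℂ)))
      (pressureDomain ε β ω) := by
  have hc (k : ℕ) : Real.exp (-(((k : ℝ) + 1 / 2) * ω * β)) ∈
      Icc 0 (Real.exp (-(β * ω / 2))) :=
    ⟨(Real.exp_pos _).le, Real.exp_le_exp.2 (by nlinarith [mul_pos hω hβ, k.cast_nonneg (α := ℝ)])⟩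
  have hcs : Summable fun k : ℕ => Real.exp (-(((k : ℝ) + 1 / 2) * ω * β)) := by
    simpa only [mul_assoc] using summable_exp_neg_nat_add_half_mul (mul_pos hω hβ)
  have hUV (z : ℂ) (hz : z ∈ pressureDomain ε β ω) (s : ℝ) (hs : s ∈ Icc 0 _) :
      z * s ∈ cutPlane ε :=
    mul_mem_cutPlane_of_mem_pressureDomain hz hs
  obtain ⟨hsum, hdiff⟩ := summable_and_differentiableOn_tsum_comp_mul
    (differentiableOn_boseFermi (by norm_num : (0 : ℝ) < 3 / 2) ε) (cutPlane_mem_nhds_zero ε)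
    (boseFermi_zero _ ε) (isOpen_pressureDomain ε β ω) hUV hc hcs
  exact ⟨fun z hz => ⟨fun k => hUV z hz _ (hc k), hsum z hz⟩, hdiff.const_mul _⟩

/-- For `β, ω > 0` and `ε ∈ {1,−1}`: for every `z` in the domain `D_±` and every
`k ≥ 0` the point `z e^{−(k+1/2)ωβ}` lies in the analyticity domain of `f_{3/2}^ε`,
the series `P_∞(β,z,ω) = ω (2πβ)^{−3/2} Σ_{k≥0} f_{3/2}^ε(z e^{−(k+1/2)ωβ})`
converges, and `z ↦ P_∞(β,z,ω)` is complex-differentiable (analytic) on `D_±`. -/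
theorem pressure_thermodynamic_limit_analytic (β ω : ℝ) (hβ : 0 < β) (hω : 0 < ω)
    (ε : ℂ) (hε : ε = 1 ∨ ε = -1) :
    (∀ z ∈ pressureDomain ε β ω,
      (∀ k : ℕ,
        z * ((Real.exp (-(((k : ℝ) + 1 / 2) * ω * β)) : ℝ) : ℂ) ∈ cutPlane ε) ∧
      Summable (fun k : ℕ =>
        boseFermi (3 / 2) ε
          (z * ((Real.exp (-(((k : ℝ) + 1 / 2) * ω * β)) : ℝ) : ℂ)))) ∧
    DifferentiableOn ℂ
      (fun z : ℂ => ((ω * (2 * π * β) ^ (-(3 : ℝ) / 2) : ℝ) : ℂ) *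
        ∑' k : ℕ, boseFermi (3 / 2) ε
          (z * ((Real.exp (-(((k : ℝ) + 1 / 2) * ω * β)) : ℝ) : ℂ)))
      (pressureDomain ε β ω) :=
  pressure_thermodynamic_limit_analytic_general β ω hβ hω ε
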